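/- The socle soc(A) is a cyclic R-module (that is, soc(A) = Ra for some a ∈ A) if and only if s_i ≤ r_i for every i ∈ {1,…,n}. -/
import Mathlib

section Aux
variable {R : Type*} [Ring R]

/-- The Jacobson radical annihilates simple modules. -/
lemma jac_smul_zero {T : Type*} [AddCommGroup T] [Module R T] [IsSimpleModule R T]
    {j : R} (hj : j ∈ Ideal.jacobson (⊥ : Ideal R)) (x : T) : j • x = 0 := by
  rcases eq_or_ne x 0 with rfl | hx
  · simp
  · have hmax := IsSimpleModule.ker_toSpanSingleton_isMaximal R hx
    have hle : Ideal.jacobson (⊥ : Ideal R) ≤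
        LinearMap.ker (LinearMap.toSpanSingleton R T x) := sInf_le ⟨bot_le, hmax⟩
    simpa [LinearMap.toSpanSingleton_apply] using hle hj

lemma finite_of_simple [Finite R] (T : Type*) [AddCommGroup T] [Module R T]
    [IsSimpleModule R T] : Finite T := by
  have := IsSimpleModule.nontrivial R T
  obtain ⟨x, hx⟩ := exists_ne (0 : T)
  exact Finite.of_surjective _ (IsSimpleModule.toSpanSingleton_surjective R hx)

lemma hom_subsingleton {T U : Type*} [AddCommGroup T] [Module R T] [IsSimpleModule R T]
    [AddCommGroup U] [Module R U] [IsSimpleModule R U]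
    (h : IsEmpty (T ≃ₗ[R] U)) : Subsingleton (T →ₗ[R] U) := by
  refine ⟨fun f g => ?_⟩
  have hf : ∀ f : T →ₗ[R] U, f = 0 := by
    intro f
    rcases f.bijective_or_eq_zero with hb | h0
    · exact (h.false (LinearEquiv.ofBijective f hb)).elim
    · exact h0
  rw [hf f, hf g]

lemma finite_hom {M N : Type*} [AddCommGroup M] [Module R M] [AddCommGroup N] [Module R N]
    [Finite M] [Finite N] : Finite (M →ₗ[R] N) :=
  Finite.of_injective (fun f => (f : M → N)) DFunLike.coe_injective

lemma card_hom_pi [Finite R] {n : ℕ} (T : Fin n → Type*) [∀ i, AddCommGroup (T i)]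
    [∀ i, Module R (T i)] [∀ i, IsSimpleModule R (T i)]
    (hdist : ∀ i j, i ≠ j → IsEmpty ((T i) ≃ₗ[R] (T j))) (k : Fin n → ℕ) (j : Fin n) :
    Nat.card ((∀ i, Fin (k i) → T i) →ₗ[R] T j) = Nat.card (T j →ₗ[R] T j) ^ k j := by
  haveI : ∀ i, Finite (T i) := fun i => finite_of_simple (R := R) (T i)
  have e1 : ((∀ i, Fin (k i) → T i) →ₗ[R] T j) ≃ (∀ i, (Fin (k i) → T i) →ₗ[R] T j) :=
    (LinearMap.lsum R (fun i => Fin (k i) → T i) ℕ).symm.toEquiv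
  have e2 : ∀ i, ((Fin (k i) → T i) →ₗ[R] T j) ≃ (Fin (k i) → (T i →ₗ[R] T j)) :=
    fun i => (LinearMap.lsum R (fun _ : Fin (k i) => T i) ℕ).symm.toEquiv
  rw [Nat.card_congr e1, Nat.card_pi]
  have hterm : ∀ i, Nat.card ((Fin (k i) → T i) →ₗ[R] T j)
      = Nat.card (T i →ₗ[R] T j) ^ k i := by
    intro i
    rw [Nat.card_congr (e2 i), Nat.card_fun]
    congr 1
    rw [Nat.card_eq_fintype_card, Fintype.card_fin]
  rw [Finset.prod_congr rfl fun i _ => hterm i]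
  rw [Finset.prod_eq_single j (fun i _ hij => ?_) (by simp)]
  haveI := hom_subsingleton (hdist i j hij)
  rw [Nat.card_of_subsingleton (0 : T i →ₗ[R] T j), one_pow]

end Aux


/-- The socle of a module: the sum of all simple submodules, i.e. the supremum of the
atoms of the submodule lattice. -/
def socle (R A : Type*) [Ring R] [AddCommGroup A] [Module R A] : Submodule R A :=
  sSup {S : Submodule R A | IsAtom S}

/-- Let `R` be a finite ring and `A` a finite left `R`-module. Let `T₁, …, T_n` be the
pairwise non-isomorphic simple left `R`-modules (pulled back from the matrix blocks of
`R/rad(R) ≅ ⊕ᵢ M_{rᵢ×rᵢ}(F_{qᵢ})`), so that `R/rad(R) ≅ ⊕ᵢ rᵢ Tᵢ` as left `R`-modules,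
and suppose `soc(A) ≅ ⊕ᵢ sᵢ Tᵢ`. Then `soc(A)` is cyclic iff `sᵢ ≤ rᵢ` for all `i`. -/
theorem socle_cyclic_iff_le (R : Type*) [Ring R] [Finite R]
    (A : Type*) [AddCommGroup A] [Module R A] [Finite A]
    (n : ℕ) (r s : Fin n → ℕ) (hr : ∀ i, 0 < r i)
    (T : Fin n → Type*) [∀ i, AddCommGroup (T i)] [∀ i, Module R (T i)]
    [∀ i, IsSimpleModule R (T i)]
    (hdist : ∀ i j, i ≠ j → IsEmpty ((T i) ≃ₗ[R] (T j)))
    (hR : Nonempty ((R ⧸ Ideal.jacobson (⊥ : Ideal R)) ≃ₗ[R] (∀ i, Fin (r i) → T i)))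
    (hs : Nonempty ((socle R A) ≃ₗ[R] (∀ i, Fin (s i) → T i))) :
    (∃ a : A, socle R A = Submodule.span R {a}) ↔ ∀ i, s i ≤ r i := by
  obtain ⟨eR⟩ := hR
  obtain ⟨e⟩ := hs
  haveI : ∀ i, Finite (T i) := fun i => finite_of_simple (R := R) (T i)
  constructor
  · rintro ⟨a, ha⟩ j
    set f₀ : R →ₗ[R] A := LinearMap.toSpanSingleton R A a with hf₀
    have hmem : ∀ r' : R, f₀ r' ∈ socle R A := by
      intro r'
      rw [ha]
      exact Submodule.smul_mem _ r' (Submodule.mem_span_singleton_self a)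
    set f₁ : R →ₗ[R] socle R A := f₀.codRestrict (socle R A) hmem with hf₁def
    have hf₁ : Function.Surjective f₁ := by
      rintro ⟨y, hy⟩
      rw [ha, Submodule.mem_span_singleton] at hy
      obtain ⟨c, rfl⟩ := hy
      exact ⟨c, rfl⟩
    set f : R →ₗ[R] (∀ i, Fin (s i) → T i) := e.toLinearMap ∘ₗ f₁ with hfdef
    have hf : Function.Surjective f := e.surjective.comp hf₁
    have hker : Ideal.jacobson (⊥ : Ideal R) ≤ LinearMap.ker f := by
      intro x hx
      have hx1 : f x = x • f 1 := by
        rw [← map_smul, smul_eq_mul, mul_one]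
      rw [LinearMap.mem_ker, hx1]
      funext i m
      simpa using jac_smul_zero (R := R) hx (f 1 i m)
    have hg₀ := Submodule.liftQ (Ideal.jacobson (⊥ : Ideal R)) f hker
    have hg₀surj : Function.Surjective
        (Submodule.liftQ (Ideal.jacobson (⊥ : Ideal R)) f hker) := by
      intro y
      obtain ⟨x, hxy⟩ := hf y
      exact ⟨Submodule.Quotient.mk x, hxy⟩
    set g : (∀ i, Fin (r i) → T i) →ₗ[R] (∀ i, Fin (s i) → T i) :=
      (Submodule.liftQ (Ideal.jacobson (⊥ : Ideal R)) f hker) ∘ₗ eR.symm.toLinearMap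
      with hgdef
    have hg : Function.Surjective g := hg₀surj.comp eR.symm.surjective
    have hinj : Function.Injective
        (fun h : (∀ i, Fin (s i) → T i) →ₗ[R] T j => h ∘ₗ g) :=
      fun h₁ h₂ hh => (LinearMap.cancel_right hg).mp hh
    haveI : Finite ((∀ i, Fin (r i) → T i) →ₗ[R] T j) := finite_hom
    have hcard := Nat.card_le_card_of_injective _ hinj
    rw [card_hom_pi T hdist s j, card_hom_pi T hdist r j] at hcard
    haveI := IsSimpleModule.nontrivial R (T j)
    haveI : Nontrivial (T j →ₗ[R] T j) := by
      obtain ⟨x, hx⟩ := exists_ne (0 : T j)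
      exact ⟨0, LinearMap.id, fun h => hx (by simpa using (LinearMap.congr_fun h x).symm)⟩
    haveI : Finite (T j →ₗ[R] T j) := finite_hom
    have h2 : 1 < Nat.card (T j →ₗ[R] T j) := Finite.one_lt_card
    exact (Nat.pow_le_pow_iff_right h2).mp hcard
  · intro hsr
    let p : (∀ i, Fin (r i) → T i) →ₗ[R] (∀ i, Fin (s i) → T i) :=
      { toFun := fun f i m => f i (Fin.castLE (hsr i) m)
        map_add' := fun f g => rfl
        map_smul' := fun c f => rfl }
    have hp : Function.Surjective p := by
      intro g
      refine ⟨fun i m => if h : (m : ℕ) < s i then g i ⟨m, h⟩ else 0, ?_⟩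
      funext i m
      show (if h : ((Fin.castLE (hsr i) m : Fin (r i)) : ℕ) < s i
          then g i ⟨(Fin.castLE (hsr i) m : Fin (r i)), h⟩ else 0) = g i m
      rw [dif_pos (by simp)]
      exact congrArg (g i) (Fin.ext (by simp))
    let φ : R →ₗ[R] socle R A :=
      e.symm.toLinearMap ∘ₗ p ∘ₗ eR.toLinearMap ∘ₗ (Ideal.jacobson (⊥ : Ideal R)).mkQ
    have hφ : Function.Surjective φ :=
      e.symm.surjective.comp (hp.comp (eR.surjective.comp (Submodule.mkQ_surjective _)))
    refine ⟨((φ 1 : socle R A) : A), ?_⟩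
    have hψ : (socle R A).subtype ∘ₗ φ
        = LinearMap.toSpanSingleton R A ((φ 1 : socle R A) : A) := by
      ext
      simp [LinearMap.toSpanSingleton_apply]
    rw [show Submodule.span R {((φ 1 : socle R A) : A)}
        = LinearMap.range (LinearMap.toSpanSingleton R A ((φ 1 : socle R A) : A)) from
        LinearMap.span_singleton_eq_range R A _,
      ← hψ, LinearMap.range_comp, LinearMap.range_eq_top.mpr hφ, Submodule.map_subtype_top]
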